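/- Let w₀, w₁, …, w_n be real numbers, not all zero, and let f : {−1,1}^n → {−1,1} be defined by f(x) = sign(w₀ + Σ_{i=1}^n w_i x_i). Then Inf(f) ≥ √(Σ_{i=0}^n w_i²) / (2√2 · max_{0≤i≤n} |w_i|) − |f̂(∅)|; in particular, Inf(f) ≥ √(Σ_{i=0}^n w_i²) / (2√2 · max_{0≤i≤n} |w_i|) − 1. -/

import Mathlib

/-!
Write `L(x) = w₀ + ∑ wᵢ xᵢ`, so that `f = sgn L` and
`E|L| = E[f L] = w₀ f̂(∅) + ∑ wᵢ f̂({i})`. Since `|f̂({i})| ≤ Inf_i(f)`, this is at most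
`max |wᵢ| · (|f̂(∅)| + Inf(f))`. On the other hand `E L² = σ²` and `E L⁴ ≤ 3σ⁴` for `σ = ‖w‖₂`,
and averaging the pointwise bound `12σ²L² ≤ 16σ³|L| + L⁴` gives the Khintchine inequality
`E|L| ≥ 9σ/16 ≥ σ/(2√2)`.
-/

open Finset Real MeasureTheory ProbabilityTheory
open scoped Classical

/-- sign: maps z to 1 if z > 0 and to −1 if z ≤ 0. -/
noncomputable def sgn (z : ℝ) : ℝ := if 0 < z then 1 else -1

/-- interpret a Bool as ±1. -/
def pm (b : Bool) : ℝ := if b then 1 else -1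

/-- probability of an event under the uniform distribution on {−1,1}^n. -/
noncomputable def unifPr (n : ℕ) (E : (Fin n → Bool) → Prop) : ℝ :=
  ((Finset.univ : Finset (Fin n → Bool)).filter E).card / 2 ^ n

/-- expectation under the uniform distribution on {−1,1}^n. -/
noncomputable def unifExp (n : ℕ) (g : (Fin n → Bool) → ℝ) : ℝ :=
  (∑ x : Fin n → Bool, g x) / 2 ^ n

/-- flip the i-th coordinate. -/
def flipAt {n : ℕ} (i : Fin n) (x : Fin n → Bool) : Fin n → Bool :=
  Function.update x i (!(x i))

/-- influence of coordinate i. -/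
noncomputable def infl {n : ℕ} (f : (Fin n → Bool) → ℝ) (i : Fin n) : ℝ :=
  unifPr n (fun x => f x ≠ f (flipAt i x))

/-- total influence. -/
noncomputable def totalInfl {n : ℕ} (f : (Fin n → Bool) → ℝ) : ℝ :=
  ∑ i, infl f i

/-- Fourier coefficient f̂(S). -/
noncomputable def fCoeff {n : ℕ} (f : (Fin n → Bool) → ℝ) (S : Finset (Fin n)) : ℝ :=
  unifExp n (fun x => f x * ∏ i ∈ S, pm (x i))

/-- Fourier entropy with log base 2 (0 · log(1/0) is 0 by convention, which holds
definitionally since `Real.log 0 = 0` in Mathlib). -/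
noncomputable def fourierEntropy {n : ℕ} (f : (Fin n → Bool) → ℝ) : ℝ :=
  ∑ S : Finset (Fin n), (fCoeff f S) ^ 2 * Real.logb 2 (1 / (fCoeff f S) ^ 2)

/-- The linear threshold function with weights w₀, w₁, …, w_n. -/
noncomputable def ltf (n : ℕ) (w : Fin (n + 1) → ℝ) : (Fin n → Bool) → ℝ :=
  fun x => sgn (w 0 + ∑ i : Fin n, w i.succ * pm (x i))

@[simp] lemma pm_true : pm true = 1 := rfl

@[simp] lemma pm_false : pm false = -1 := rfl

lemma pm_not (b : Bool) : pm (!b) = -pm b := by cases b <;> simp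

lemma abs_pm (b : Bool) : |pm b| = 1 := by cases b <;> simp

lemma sgn_mul_self (z : ℝ) : sgn z * z = |z| := by
  unfold sgn
  split_ifs with hz
  · rw [one_mul, abs_of_pos hz]
  · rw [neg_one_mul, abs_of_nonpos (not_lt.mp hz)]

lemma abs_sgn (z : ℝ) : |sgn z| = 1 := by
  unfold sgn
  split_ifs <;> simp

lemma mul_sq_le_mul_abs_add_pow_four (t x : ℝ) (ht : 0 ≤ t) :
    12 * t ^ 2 * x ^ 2 ≤ 16 * t ^ 3 * |x| + x ^ 4 := by
  -- the difference is `|x| (|x| - 2t)² (|x| + 4t)`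
  have key : 0 ≤ |x| * ((|x| - 2 * t) ^ 2 * (|x| + 4 * t)) := by positivity
  have hx2 : x ^ 2 = |x| ^ 2 := (sq_abs x).symm
  have hx4 : x ^ 4 = |x| ^ 4 := by rw [show x ^ 4 = (x ^ 2) ^ 2 by ring, hx2]; ring
  rw [hx2, hx4]
  nlinarith [key]

theorem sum_abs_ge_of_sum_pow_four_le {ι : Type*} (s : Finset ι) (X : ι → ℝ) {c t : ℝ}
    (ht : 0 ≤ t) (h2 : ∑ i ∈ s, X i ^ 2 = c * t ^ 2)
    (h4 : ∑ i ∈ s, X i ^ 4 ≤ 3 * c * t ^ 4) :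
    9 * c * t ≤ 16 * ∑ i ∈ s, |X i| := by
  have hsum : 12 * t ^ 2 * ∑ i ∈ s, X i ^ 2 ≤
      16 * t ^ 3 * ∑ i ∈ s, |X i| + ∑ i ∈ s, X i ^ 4 := by
    rw [mul_sum, mul_sum, ← sum_add_distrib]
    exact sum_le_sum fun i _ => mul_sq_le_mul_abs_add_pow_four t (X i) ht
  rw [h2] at hsum
  rcases ht.eq_or_lt with rfl | htpos
  · simpa using sum_nonneg fun i _ => abs_nonneg (X i)
  have : t ^ 3 * (9 * c * t) ≤ t ^ 3 * (16 * ∑ i ∈ s, |X i|) := by nlinarith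
  exact le_of_mul_le_mul_left this (by positivity)

section cube

variable {n : ℕ}

lemma sum_pi_fin_succ {α M : Type*} [Fintype α] [AddCommMonoid M]
    (g : (Fin (n + 1) → α) → M) :
    ∑ x, g x = ∑ b, ∑ x : Fin n → α, g (Fin.cons b x) := by
  rw [← (Fin.consEquiv fun _ => α).sum_comp, Fintype.sum_prod_type]
  rfl

def affineForm (a : ℝ) (v : Fin n → ℝ) (x : Fin n → Bool) : ℝ :=
  a + ∑ i, v i * pm (x i)

lemma ltf_apply (w : Fin (n + 1) → ℝ) (x : Fin n → Bool) :
    ltf n w x = sgn (affineForm (w 0) (Fin.tail w) x) :=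
  rfl

lemma affineForm_cons (a : ℝ) (v : Fin (n + 1) → ℝ) (b : Bool) (x : Fin n → Bool) :
    affineForm a v (Fin.cons b x) = affineForm (a + v 0 * pm b) (Fin.tail v) x := by
  simp only [affineForm, Fin.sum_univ_succ, Fin.cons_zero, Fin.cons_succ, Fin.tail]
  ring

theorem sum_affineForm_sq (a : ℝ) (v : Fin n → ℝ) :
    ∑ x, affineForm a v x ^ 2 = 2 ^ n * (a ^ 2 + ∑ i, v i ^ 2) := by
  induction n generalizing a with
  | zero => simp [affineForm]
  | succ n ih =>
    simp only [sum_pi_fin_succ, affineForm_cons, ih, Fintype.sum_bool, Fin.sum_univ_succ,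
      pm_true, pm_false, Fin.tail]
    ring

/-- The bound `a⁴ + 6a²S + 3S²` rather than `3(a² + S)²` is the one that survives the
induction, in which the first coordinate is absorbed into the constant term. -/
theorem sum_affineForm_pow_four_le (a : ℝ) (v : Fin n → ℝ) :
    ∑ x, affineForm a v x ^ 4 ≤
      2 ^ n * (a ^ 4 + 6 * a ^ 2 * ∑ i, v i ^ 2 + 3 * (∑ i, v i ^ 2) ^ 2) := by
  induction n generalizing a with
  | zero => simp [affineForm]
  | succ n ih =>
    simp only [sum_pi_fin_succ, affineForm_cons, Fintype.sum_bool, Fin.sum_univ_succ]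
    refine (add_le_add (ih _ _) (ih _ _)).trans (le_of_sub_nonneg ?_)
    simp only [pm_true, pm_false, Fin.tail]
    -- the slack is `4 · 2ⁿ · v₀⁴`
    ring_nf
    positivity

theorem khintchine_affineForm (a : ℝ) (v : Fin n → ℝ) :
    9 * 2 ^ n * √(a ^ 2 + ∑ i, v i ^ 2) ≤ 16 * ∑ x, |affineForm a v x| := by
  set S := ∑ i, v i ^ 2
  have hS : 0 ≤ a ^ 2 + S := by positivity
  refine sum_abs_ge_of_sum_pow_four_le _ _ (Real.sqrt_nonneg _) ?_ ?_
  · rw [sum_affineForm_sq, Real.sq_sqrt hS]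
  · refine (sum_affineForm_pow_four_le a v).trans ?_
    rw [show √(a ^ 2 + S) ^ 4 = (a ^ 2 + S) ^ 2 by
      rw [show 4 = 2 * 2 from rfl, pow_mul, sq_sqrt hS]]
    have : 0 ≤ (2 : ℝ) ^ n * a ^ 2 * (2 * a ^ 2) := by positivity
    nlinarith

end cube

section influence

variable {n : ℕ}

lemma flipAt_apply_self (i : Fin n) (x : Fin n → Bool) : flipAt i x i = !x i :=
  Function.update_self i _ x

lemma flipAt_involutive (i : Fin n) : Function.Involutive (flipAt i) := by
  intro x
  funext j
  by_cases h : j = i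
  · subst h
    simp [flipAt]
  · simp [flipAt, Function.update_of_ne h]

lemma infl_nonneg (f : (Fin n → Bool) → ℝ) (i : Fin n) : 0 ≤ infl f i := by
  unfold infl unifPr
  positivity

lemma totalInfl_nonneg (f : (Fin n → Bool) → ℝ) : 0 ≤ totalInfl f :=
  sum_nonneg fun i _ => infl_nonneg f i

lemma sum_eq_two_pow_mul_fCoeff_empty (f : (Fin n → Bool) → ℝ) :
    ∑ x, f x = 2 ^ n * fCoeff f ∅ := by
  simp only [fCoeff, unifExp, prod_empty, mul_one]
  field_simp

lemma abs_fCoeff_empty_le_one (f : (Fin n → Bool) → ℝ) (hf : ∀ x, |f x| ≤ 1) :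
    |fCoeff f ∅| ≤ 1 := by
  have h : 2 ^ n * |fCoeff f ∅| ≤ 2 ^ n * 1 :=
    calc 2 ^ n * |fCoeff f ∅| = |∑ x, f x| := by
          rw [sum_eq_two_pow_mul_fCoeff_empty, abs_mul,
            abs_of_pos (by positivity : (0 : ℝ) < 2 ^ n)]
      _ ≤ ∑ x, |f x| := abs_sum_le_sum_abs _ _
      _ ≤ ∑ _x : Fin n → Bool, (1 : ℝ) := sum_le_sum fun x _ => hf x
      _ = 2 ^ n * 1 := by simp
  exact le_of_mul_le_mul_left h (by positivity)

theorem abs_sum_mul_pm_le_infl (f : (Fin n → Bool) → ℝ) (hf : ∀ x, |f x| ≤ 1) (i : Fin n) :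
    |∑ x, f x * pm (x i)| ≤ 2 ^ n * infl f i := by
  have hpair : 2 * ∑ x, f x * pm (x i) = ∑ x, pm (x i) * (f x - f (flipAt i x)) := by
    have hflip := Equiv.sum_comp ((flipAt_involutive i).toPerm _) fun x => f x * pm (x i)
    simp only [Function.Involutive.coe_toPerm, flipAt_apply_self, pm_not] at hflip
    rw [two_mul]
    nth_rewrite 2 [← hflip]
    rw [← sum_add_distrib]
    exact sum_congr rfl fun x _ => by ring
  have hedge : ∀ x, |pm (x i) * (f x - f (flipAt i x))| ≤
      2 * if f x ≠ f (flipAt i x) then 1 else 0 := by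
    intro x
    rw [abs_mul, abs_pm, one_mul]
    split_ifs with hx
    · linarith [abs_sub (f x) (f (flipAt i x)), hf x, hf (flipAt i x)]
    · simp [not_not.mp hx]
  have hcount : ∑ x, (if f x ≠ f (flipAt i x) then (1 : ℝ) else 0) = 2 ^ n * infl f i := by
    rw [sum_boole, infl, unifPr, mul_div_cancel₀ _ (by positivity)]
    -- `infl` filters with the classical decidability instance, `sum_boole` with `instDecidableNot`
    congr
  have h2 : 2 * |∑ x, f x * pm (x i)| ≤ 2 * (2 ^ n * infl f i) :=
    calc 2 * |∑ x, f x * pm (x i)| = |∑ x, pm (x i) * (f x - f (flipAt i x))| := by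
          rw [← hpair, abs_mul, abs_two]
      _ ≤ ∑ x, |pm (x i) * (f x - f (flipAt i x))| := abs_sum_le_sum_abs _ _
      _ ≤ ∑ x, 2 * if f x ≠ f (flipAt i x) then (1 : ℝ) else 0 :=
          sum_le_sum fun x _ => hedge x
      _ = 2 * (2 ^ n * infl f i) := by rw [← mul_sum, hcount]
  linarith

theorem sum_mul_affineForm_le (f : (Fin n → Bool) → ℝ) (hf : ∀ x, |f x| ≤ 1) {a M : ℝ}
    {v : Fin n → ℝ} (ha : |a| ≤ M) (hv : ∀ i, |v i| ≤ M) :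
    ∑ x, f x * affineForm a v x ≤ 2 ^ n * M * (|fCoeff f ∅| + totalInfl f) := by
  have hM : 0 ≤ M := (abs_nonneg a).trans ha
  have hexpand : ∑ x, f x * affineForm a v x =
      a * ∑ x, f x + ∑ i, v i * ∑ x, f x * pm (x i) := by
    simp only [affineForm, mul_add, mul_sum, sum_add_distrib]
    rw [sum_comm]
    congr 1 <;> refine sum_congr rfl fun _ _ => ?_
    · ring
    · exact sum_congr rfl fun _ _ => by ring
  have hconst : a * ∑ x, f x ≤ 2 ^ n * M * |fCoeff f ∅| := by
    rw [sum_eq_two_pow_mul_fCoeff_empty]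
    refine (le_abs_self _).trans ?_
    rw [abs_mul, abs_mul, abs_of_pos (by positivity : (0 : ℝ) < 2 ^ n), mul_left_comm,
      mul_assoc]
    gcongr
  have hlin : ∀ i, v i * ∑ x, f x * pm (x i) ≤ M * (2 ^ n * infl f i) := fun i =>
    (le_abs_self _).trans <| by
      rw [abs_mul]
      exact mul_le_mul (hv i) (abs_sum_mul_pm_le_infl f hf i) (abs_nonneg _) hM
  calc ∑ x, f x * affineForm a v x
      ≤ 2 ^ n * M * |fCoeff f ∅| + ∑ i, M * (2 ^ n * infl f i) := by
        rw [hexpand]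
        exact add_le_add hconst (sum_le_sum fun i _ => hlin i)
    _ = 2 ^ n * M * (|fCoeff f ∅| + totalInfl f) := by
        rw [totalInfl, ← mul_sum, ← mul_sum]
        ring

theorem ltf_sqrt_sum_sq_le (w : Fin (n + 1) → ℝ) {M : ℝ} (hM : ∀ i, |w i| ≤ M) :
    9 * √(∑ i, w i ^ 2) ≤ 16 * (M * (|fCoeff (ltf n w) ∅| + totalInfl (ltf n w))) := by
  have hsq : ∑ i, w i ^ 2 = w 0 ^ 2 + ∑ i, Fin.tail w i ^ 2 := Fin.sum_univ_succ _
  have hkey : 2 ^ n * (9 * √(∑ i, w i ^ 2)) ≤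
      2 ^ n * (16 * (M * (|fCoeff (ltf n w) ∅| + totalInfl (ltf n w)))) :=
    calc 2 ^ n * (9 * √(∑ i, w i ^ 2))
        ≤ 16 * ∑ x, |affineForm (w 0) (Fin.tail w) x| := by
          rw [hsq, ← mul_assoc, mul_comm _ (9 : ℝ)]
          exact khintchine_affineForm _ _
      _ = 16 * ∑ x, ltf n w x * affineForm (w 0) (Fin.tail w) x := by
          simp only [ltf_apply, sgn_mul_self]
      _ ≤ 16 * (2 ^ n * M * (|fCoeff (ltf n w) ∅| + totalInfl (ltf n w))) := by
          gcongr
          exact sum_mul_affineForm_le _ (fun x => (abs_sgn _).le) (hM 0) fun i => hM i.succ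
      _ = 2 ^ n * (16 * (M * (|fCoeff (ltf n w) ∅| + totalInfl (ltf n w)))) := by ring
  exact le_of_mul_le_mul_left hkey (by positivity)

end influence

theorem influence_khintchine_lower_bound_general (n : ℕ) (w : Fin (n + 1) → ℝ) :
    totalInfl (ltf n w) ≥
      Real.sqrt (∑ i, w i ^ 2) /
        (2 * Real.sqrt 2 * Finset.univ.sup' Finset.univ_nonempty (fun i => |w i|))
        - |fCoeff (ltf n w) ∅| ∧
    totalInfl (ltf n w) ≥
      Real.sqrt (∑ i, w i ^ 2) /
        (2 * Real.sqrt 2 * Finset.univ.sup' Finset.univ_nonempty (fun i => |w i|))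
        - 1 := by
  set M := univ.sup' univ_nonempty fun i => |w i|
  set T := |fCoeff (ltf n w) ∅| + totalInfl (ltf n w)
  have hM : ∀ i, |w i| ≤ M := fun i => le_sup' (fun i => |w i|) (mem_univ i)
  have hM0 : 0 ≤ M := (abs_nonneg _).trans (hM 0)
  have hT : 0 ≤ T := add_nonneg (abs_nonneg _) (totalInfl_nonneg _)
  have h9 := ltf_sqrt_sum_sq_le w hM
  -- `div_le_of_le_mul₀` also covers `M = 0`, where the quotient is `0`
  have hbound : √(∑ i, w i ^ 2) / (2 * √2 * M) ≤ T := by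
    refine div_le_of_le_mul₀ (by positivity) hT ?_
    nlinarith [mul_nonneg (sub_nonneg.mpr one_lt_sqrt_two.le) (mul_nonneg hM0 hT)]
  have hcoeff := abs_fCoeff_empty_le_one (ltf n w) fun x => (abs_sgn _).le
  exact ⟨by linarith, by linarith⟩

/-- Khintchine-based lower bound on the total influence of an LTF. -/
theorem influence_khintchine_lower_bound (n : ℕ) (w : Fin (n + 1) → ℝ) (hw : w ≠ 0) :
    totalInfl (ltf n w) ≥
      Real.sqrt (∑ i, w i ^ 2) /
        (2 * Real.sqrt 2 * Finset.univ.sup' Finset.univ_nonempty (fun i => |w i|))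
        - |fCoeff (ltf n w) ∅| ∧
    totalInfl (ltf n w) ≥
      Real.sqrt (∑ i, w i ^ 2) /
        (2 * Real.sqrt 2 * Finset.univ.sup' Finset.univ_nonempty (fun i => |w i|))
        - 1 :=
  influence_khintchine_lower_bound_general n w
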